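/- arXiv:1512.06942 — 4 statements merged into one kernel-verified Lean document; each statement's English description precedes it below -/
import Mathlib

section
/- For every term t, the replacement map μ_t (defined recursively) is the minimum replacement map compatible with t, i.e., Pos_F(t) ⊆ Pos^{μ_t}(t), and for any replacement map μ with Pos_F(t) ⊆ Pos^μ(t) one has μ_t ⊑ μ. -/
namespace CSR

/-- First-order terms over a signature `F` with arity `ar` and variables `X`. -/
inductive Term (F : Type) (ar : F → ℕ) (X : Type) : Type where
  | var : X → Term F ar X
  | app : (f : F) → (Fin (ar f) → Term F ar X) → Term F ar X

variable {F X : Type} {ar : F → ℕ}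

/-- A replacement map assigns to each symbol a subset of its argument positions. -/
abbrev RepMap (F : Type) (ar : F → ℕ) := (f : F) → Set (Fin (ar f))

def Term.IsVar : Term F ar X → Prop
  | .var _ => True
  | .app _ _ => False

def Term.root : Term F ar X → Option F
  | .var _ => none
  | .app f _ => some f

/-- All positions of a term. -/
def Pos : Term F ar X → Set (List ℕ)
  | .var _ => {[]}
  | .app f ts => {[]} ∪ ⋃ i : Fin (ar f), (List.cons (i : ℕ)) '' Pos (ts i)

/-- Nonvariable positions of a term. -/
def PosF : Term F ar X → Set (List ℕ)
  | .var _ => ∅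
  | .app f ts => {[]} ∪ ⋃ i : Fin (ar f), (List.cons (i : ℕ)) '' PosF (ts i)

/-- μ-replacing positions of a term. -/
def PosMu (μ : RepMap F ar) : Term F ar X → Set (List ℕ)
  | .var _ => {[]}
  | .app f ts => {[]} ∪ ⋃ i ∈ μ f, (List.cons (i : ℕ)) '' PosMu μ (ts i)

/-- Subterm at a position. -/
def subtermAt : Term F ar X → List ℕ → Option (Term F ar X)
  | t, [] => some t
  | .var _, _ :: _ => none
  | .app f ts, i :: p => if h : i < ar f then subtermAt (ts ⟨i, h⟩) p else none

/-- Replace the subterm at a position. -/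
def replaceAt : Term F ar X → List ℕ → Term F ar X → Option (Term F ar X)
  | _, [], u => some u
  | .var _, _ :: _, _ => none
  | .app f ts, i :: p, u =>
      if h : i < ar f then
        (replaceAt (ts ⟨i, h⟩) p u).map fun v => Term.app f (Function.update ts ⟨i, h⟩ v)
      else none

/-- Application of a substitution. -/
def subst (σ : X → Term F ar X) : Term F ar X → Term F ar X
  | .var x => σ x
  | .app f ts => .app f fun i => subst σ (ts i)

structure Rule (F : Type) (ar : F → ℕ) (X : Type) : Type where
  lhs : Term F ar X
  rhs : Term F ar X
  lhs_not_var : ¬ lhs.IsVar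

abbrev TRS (F : Type) (ar : F → ℕ) (X : Type) := Set (Rule F ar X)

/-- A redex is an instance of a left-hand side. -/
def IsRedex (R : TRS F ar X) (t : Term F ar X) : Prop :=
  ∃ r ∈ R, ∃ σ, t = subst σ r.lhs

/-- Rewriting at a given position. -/
def RewAt (R : TRS F ar X) (p : List ℕ) (s t : Term F ar X) : Prop :=
  ∃ r ∈ R, ∃ σ, subtermAt s p = some (subst σ r.lhs) ∧ replaceAt s p (subst σ r.rhs) = some t

def Rew (R : TRS F ar X) (s t : Term F ar X) : Prop := ∃ p, RewAt R p s t

/-- Context-sensitive rewriting: rewriting at μ-replacing positions. -/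
def CSRew (R : TRS F ar X) (μ : RepMap F ar) (s t : Term F ar X) : Prop :=
  ∃ p ∈ PosMu μ s, RewAt R p s t

def RewStar (R : TRS F ar X) : Term F ar X → Term F ar X → Prop :=
  Relation.ReflTransGen (Rew R)

def CSRewStar (R : TRS F ar X) (μ : RepMap F ar) : Term F ar X → Term F ar X → Prop :=
  Relation.ReflTransGen (CSRew R μ)

/-- μ-termination: no infinite ↪_μ sequences. -/
def MuTerminating (R : TRS F ar X) (μ : RepMap F ar) : Prop :=
  WellFounded (fun a b => CSRew R μ b a)

/-- Defined symbols: roots of left-hand sides. -/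
def Defined (R : TRS F ar X) : Set F := {f | ∃ r ∈ R, r.lhs.root = some f}

def varOccs : Term F ar X → Multiset X
  | .var x => {x}
  | .app f ts => ∑ i : Fin (ar f), varOccs (ts i)

def LeftLinear [DecidableEq X] (R : TRS F ar X) : Prop :=
  ∀ r ∈ R, ∀ x : X, (varOccs r.lhs).count x ≤ 1

def IsGround : Term F ar X → Prop
  | .var _ => False
  | .app _ ts => ∀ i, IsGround (ts i)

def symbols : Term F ar X → Set F
  | .var _ => ∅
  | .app f ts => {f} ∪ ⋃ i, symbols (ts i)

/-- A constructor term (w.r.t. `R`): contains no defined symbol. -/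
def ConsTerm (R : TRS F ar X) (t : Term F ar X) : Prop := ∀ f ∈ symbols t, f ∉ Defined R

def NormalForm (R : TRS F ar X) (t : Term F ar X) : Prop := ¬ ∃ u, Rew R t u

def MuNormalForm (R : TRS F ar X) (μ : RepMap F ar) (t : Term F ar X) : Prop :=
  ¬ ∃ u, CSRew R μ t u

/-- Head-normal form (root-stable term). -/
def HeadNormalForm (R : TRS F ar X) (t : Term F ar X) : Prop :=
  ∀ u, RewStar R t u → ¬ IsRedex R u

def muEps (f : F) (ts : Fin (ar f) → Term F ar X) : RepMap F ar :=
  fun g => {i | ∃ h : g = f, ¬ (ts (Fin.cast (congrArg ar h) i)).IsVar}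

/-- The minimum replacement map compatible with a term. -/
def muTerm : Term F ar X → RepMap F ar
  | .var _ => ⊥
  | .app f ts => muEps f ts ⊔ ⨆ i : Fin (ar f), muTerm (ts i)

/-- The canonical replacement map of a TRS. -/
def muCan (R : TRS F ar X) : RepMap F ar := ⨆ r ∈ R, muTerm r.lhs

/-- μ is a canonical replacement map for R. -/
def Canonical (R : TRS F ar X) (μ : RepMap F ar) : Prop := muCan R ≤ μ

/-- R is exhaustive: defined symbols applied to closed constructor terms yield redexes. -/
def Exhaustive (R : TRS F ar X) : Prop :=
  ∀ f ∈ Defined R, ∀ ts : Fin (ar f) → Term F ar X,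
    (∀ i, IsGround (ts i) ∧ ConsTerm R (ts i)) → IsRedex R (Term.app f ts)

/-- Possibly infinite (ground) terms, represented by their labelling function. -/
structure ITerm (F : Type) (ar : F → ℕ) : Type where
  label : List ℕ → Option F
  root_isSome : (label []).isSome
  coherent : ∀ p i, (label (p ++ [i])).isSome ↔ ∃ f, label p = some f ∧ i < ar f

/-- The symbol of a finite term at a position (if any). -/
def labelAt (t : Term F ar X) (p : List ℕ) : Option F := (subtermAt t p).bind Term.root

/-- `s` rewrites (in the limit) to the possibly infinite term `δ`:
arbitrarily deep prefixes of `δ` are reachable by finite rewriting from `s`. -/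
def RewsToInf (R : TRS F ar X) (s : Term F ar X) (δ : ITerm F ar) : Prop :=
  ∀ n : ℕ, ∃ u, RewStar R s u ∧ ∀ p : List ℕ, p.length < n → labelAt u p = δ.label p

/-- A possibly infinite term built only from constructors of `R`. -/
def ITerm.Cons (R : TRS F ar X) (δ : ITerm F ar) : Prop :=
  ∀ p f, δ.label p = some f → f ∉ Defined R

/-- Every finite ground term rewrites to a possibly infinite constructor normal form. -/
def ConstructorNormalizing (R : TRS F ar X) : Prop :=
  ∀ s : Term F ar X, IsGround s → ∃ δ : ITerm F ar, δ.Cons R ∧ RewsToInf R s δ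

/-- An infinite path through data constructors. -/
def InfiniteDataPath (CΔ : Set F) (δ : ITerm F ar) : Prop :=
  ∃ g : ℕ → List ℕ, (∀ n, ∃ c ∈ CΔ, δ.label (g n) = some c) ∧
    ∀ n, ∃ j : ℕ, g (n + 1) = g n ++ [j]

def DataFinite (R : TRS F ar X) (CΔ : Set F) : Prop :=
  ∀ s : Term F ar X, IsGround s → ∀ δ : ITerm F ar, δ.Cons R → RewsToInf R s δ →
    ¬ InfiniteDataPath CΔ δ

/-- The replacement map activating the data arguments of data constructors. -/
def muDelta (CΔ : Set F) (arΔ : F → ℕ) : RepMap F ar :=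
  fun f => {i | f ∈ CΔ ∧ (i : ℕ) < arΔ f}

/-- Non-overlapping: no left-hand side unifies with a nonvariable subterm of a left-hand
side except trivially. -/
def NonOverlapping (R : TRS F ar X) : Prop :=
  ∀ r1 ∈ R, ∀ r2 ∈ R, ∀ p ∈ PosF r2.lhs, ∀ u, subtermAt r2.lhs p = some u →
    ∀ σ τ : X → Term F ar X, subst σ u = subst τ r1.lhs → p = [] ∧ r1 = r2

def Orthogonal [DecidableEq X] (R : TRS F ar X) : Prop :=
  LeftLinear R ∧ NonOverlapping R

/-- Strong compatibility: the canonical replacing positions of each left-hand side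
are exactly its nonvariable positions. -/
def StronglyCompatibleTRS (R : TRS F ar X) : Prop :=
  ∀ r ∈ R, PosF r.lhs = PosMu (muCan R) r.lhs

def ConstructorTRS (R : TRS F ar X) : Prop :=
  ∀ r ∈ R, ∃ f ts, r.lhs = Term.app f ts ∧ ∀ i, ConsTerm R (ts i)

/-- A flat constructor term `c(x₁,…,xₘ)`. -/
def FlatConsTerm (R : TRS F ar X) : Term F ar X → Prop
  | .var _ => False
  | .app c ts => c ∉ Defined R ∧ ∀ i, (ts i).IsVar

def Shallow (R : TRS F ar X) : Prop :=
  ∃ I : F → Set ℕ, ∀ r ∈ R, ∃ f ts, r.lhs = Term.app f ts ∧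
    ∀ i : Fin (ar f), ((i : ℕ) ∈ I f → FlatConsTerm R (ts i)) ∧ ((i : ℕ) ∉ I f → (ts i).IsVar)

/-- A proper specification: arguments of left-hand sides are variables or flat
constructor terms. -/
def ProperSpec (R : TRS F ar X) : Prop :=
  ∀ r ∈ R, ∃ f ts, r.lhs = Term.app f ts ∧ ∀ i, (ts i).IsVar ∨ FlatConsTerm R (ts i)

end CSR

namespace CSR
variable {F X : Type} {ar : F → ℕ}

theorem posMu_mono {μ μ' : RepMap F ar} (h : μ ≤ μ') :
    ∀ t : Term F ar X, PosMu μ t ⊆ PosMu μ' t := by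
  intro t
  induction t with
  | var x => exact subset_rfl
  | app f ts ih =>
    intro p hp
    simp only [PosMu, Set.mem_union, Set.mem_iUnion] at hp ⊢
    rcases hp with hp | ⟨i, hi, q, hq, rfl⟩
    · exact Or.inl hp
    · exact Or.inr ⟨i, h f hi, q, ih i hq, rfl⟩

theorem not_isVar_of_posF {t : Term F ar X} {p : List ℕ} (hp : p ∈ PosF t) : ¬ t.IsVar := by
  cases t with
  | var x => simp [PosF] at hp
  | app f ts => simp [Term.IsVar]

end CSR

/-- `μ_t` is the minimum replacement map compatible with `t`. -/
theorem stmt_3 {F X : Type} {ar : F → ℕ} (t : CSR.Term F ar X) :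
    CSR.PosF t ⊆ CSR.PosMu (CSR.muTerm t) t ∧
    ∀ μ : CSR.RepMap F ar, CSR.PosF t ⊆ CSR.PosMu μ t → CSR.muTerm t ≤ μ := by
  induction t with
  | var x =>
    constructor
    · intro p hp; simp [CSR.PosF] at hp
    · intro μ _; exact bot_le
  | app f ts ih =>
    constructor
    · intro p hp
      simp only [CSR.PosF, Set.mem_union, Set.mem_iUnion] at hp
      simp only [CSR.PosMu, Set.mem_union, Set.mem_iUnion]
      rcases hp with hp | ⟨i, q, hq, rfl⟩
      · exact Or.inl hp
      · refine Or.inr ⟨i, ?_, q, ?_, rfl⟩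
        · -- i ∈ muTerm (app f ts) f
          refine le_sup_left (α := CSR.RepMap F ar) f ?_
          exact ⟨rfl, CSR.not_isVar_of_posF hq⟩
        · exact CSR.posMu_mono
            (le_trans (le_iSup (fun i => CSR.muTerm (ts i)) i)
              (le_sup_right (α := CSR.RepMap F ar))) (ts i) ((ih i).1 hq)
    · intro μ hμ
      have key : ∀ (i : Fin (ar f)) (q : List ℕ), q ∈ CSR.PosF (ts i) →
          i ∈ μ f ∧ q ∈ CSR.PosMu μ (ts i) := by
        intro i q hq
        have : ((i : ℕ) :: q) ∈ CSR.PosMu μ (CSR.Term.app f ts) := by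
          apply hμ
          simp only [CSR.PosF, Set.mem_union, Set.mem_iUnion]
          exact Or.inr ⟨i, q, hq, rfl⟩
        simp only [CSR.PosMu, Set.mem_union, Set.mem_iUnion] at this
        rcases this with h | ⟨j, hj, r, hr, heq⟩
        · simp at h
        · obtain ⟨h1, h2⟩ := List.cons.injEq _ _ _ _ ▸ heq
          have : j = i := Fin.ext h1
          subst this; subst h2
          exact ⟨hj, hr⟩
      refine sup_le ?_ ?_
      · intro g i hi
        obtain ⟨hgf, hnv⟩ := hi
        subst hgf
        simp only [Fin.cast_eq_self] at hnv
        cases hts : ts i with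
        | var x => rw [hts] at hnv; exact absurd trivial hnv
        | app g' ts' =>
          have hq : ([] : List ℕ) ∈ CSR.PosF (ts i) := by
            rw [hts]; simp [CSR.PosF]
          exact (key i [] hq).1
      · refine iSup_le fun i => (ih i).2 μ fun q hq => (key i q hq).2
end

section
/- For a given term t, if a replacement map μ over the signature F(t) of symbols occurring in t is strongly compatible with t (i.e., Pos_F(t) = Pos^μ(t)), then μ = μ_t, the minimum replacement map compatible with t. -/
namespace CSR

variable {F X : Type} {ar : F → ℕ}

section Aux

lemma cons_mem_PosF {f : F} {ts : Fin (ar f) → Term F ar X} {i : Fin (ar f)} {q : List ℕ} :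
    ((i : ℕ) :: q) ∈ PosF (Term.app f ts) ↔ q ∈ PosF (ts i) := by
  simp only [PosF, Set.mem_union, Set.mem_singleton_iff, Set.mem_iUnion, Set.mem_image]
  constructor
  · rintro (h | ⟨j, p, hp, heq⟩)
    · simp at h
    · obtain ⟨h1, rfl⟩ := List.cons.injEq _ _ _ _ ▸ heq
      rwa [show j = i from Fin.ext h1] at hp
  · exact fun h => Or.inr ⟨i, q, h, rfl⟩

lemma cons_mem_PosMu {μ : RepMap F ar} {f : F} {ts : Fin (ar f) → Term F ar X}
    {i : Fin (ar f)} {q : List ℕ} :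
    ((i : ℕ) :: q) ∈ PosMu μ (Term.app f ts) ↔ i ∈ μ f ∧ q ∈ PosMu μ (ts i) := by
  simp only [PosMu, Set.mem_union, Set.mem_singleton_iff, Set.mem_iUnion, Set.mem_image]
  constructor
  · rintro (h | ⟨j, hj, p, hp, heq⟩)
    · simp at h
    · obtain ⟨h1, rfl⟩ := List.cons.injEq _ _ _ _ ▸ heq
      obtain rfl : j = i := Fin.ext h1
      exact ⟨hj, hp⟩
  · exact fun ⟨h1, h2⟩ => Or.inr ⟨i, h1, q, h2, rfl⟩

lemma nil_mem_PosMu {μ : RepMap F ar} (t : Term F ar X) : [] ∈ PosMu μ t := by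
  cases t <;> simp [PosMu]

lemma nil_mem_PosF_iff {t : Term F ar X} : [] ∈ PosF t ↔ ¬ t.IsVar := by
  cases t <;> simp [PosF, Term.IsVar]

lemma muTerm_app_apply {f : F} {ts : Fin (ar f) → Term F ar X} (g : F) :
    muTerm (Term.app f ts) g = muEps f ts g ∪ ⋃ i, muTerm (ts i) g := by
  simp [muTerm, iSup_apply]

lemma mem_muEps_self {f : F} {ts : Fin (ar f) → Term F ar X} {i : Fin (ar f)} :
    i ∈ muEps f ts f ↔ ¬ (ts i).IsVar := by
  constructor
  · rintro ⟨h, hv⟩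
    rwa [show Fin.cast (congrArg ar h) i = i from Fin.ext rfl] at hv
  · exact fun h => ⟨rfl, by simpa using h⟩

/-- strong compatibility forces μ f to be exactly the nonvariable argument positions -/
lemma sc_mu_root {μ : RepMap F ar} {f : F} {ts : Fin (ar f) → Term F ar X}
    (hsc : PosF (Term.app f ts) = PosMu μ (Term.app f ts)) (i : Fin (ar f)) :
    i ∈ μ f ↔ ¬ (ts i).IsVar := by
  constructor
  · intro hi
    have : ((i : ℕ) :: []) ∈ PosMu μ (Term.app f ts) :=
      cons_mem_PosMu.2 ⟨hi, nil_mem_PosMu _⟩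
    rw [← hsc] at this
    exact nil_mem_PosF_iff.1 (cons_mem_PosF.1 this)
  · intro hv
    have : ((i : ℕ) :: []) ∈ PosF (Term.app f ts) :=
      cons_mem_PosF.2 (nil_mem_PosF_iff.2 hv)
    rw [hsc] at this
    exact (cons_mem_PosMu.1 this).1

lemma sc_sub {μ : RepMap F ar} {f : F} {ts : Fin (ar f) → Term F ar X}
    (hsc : PosF (Term.app f ts) = PosMu μ (Term.app f ts)) {i : Fin (ar f)}
    (hi : i ∈ μ f) : PosF (ts i) = PosMu μ (ts i) := by
  ext q
  have := Set.ext_iff.1 hsc ((i : ℕ) :: q)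
  rw [cons_mem_PosF, cons_mem_PosMu] at this
  exact ⟨fun h => ((this.1 h).2), fun h => this.2 ⟨hi, h⟩⟩

lemma lemA {μ : RepMap F ar} : ∀ {t : Term F ar X}, PosF t = PosMu μ t → muTerm t ≤ μ := by
  intro t
  induction t with
  | var x => intro _; exact bot_le
  | app f ts ih =>
    intro hsc g j hj
    rw [muTerm_app_apply] at hj
    rcases hj with hj | hj
    · obtain ⟨rfl, hv⟩ := hj
      rw [show Fin.cast (congrArg ar rfl) j = j from Fin.ext rfl] at hv
      exact (sc_mu_root hsc j).2 hv
    · simp only [Set.mem_iUnion] at hj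
      obtain ⟨i, hi⟩ := hj
      by_cases hv : (ts i).IsVar
      · cases hts : ts i with
        | var x => rw [hts] at hi; simp [muTerm] at hi
        | app g' ts' => rw [hts] at hv; simp [Term.IsVar] at hv
      · have hm : i ∈ μ f := (sc_mu_root hsc i).2 hv
        exact ih i (sc_sub hsc hm) g hi

lemma lemB {μ : RepMap F ar} : ∀ {t : Term F ar X}, PosF t = PosMu μ t →
    ∀ g ∈ symbols t, μ g ⊆ muTerm t g := by
  intro t
  induction t with
  | var x => intro _ g hg; simp [symbols] at hg
  | app f ts ih =>
    intro hsc g hg j hj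
    rw [muTerm_app_apply]
    simp only [symbols, Set.mem_union, Set.mem_singleton_iff, Set.mem_iUnion] at hg
    rcases hg with rfl | ⟨i, hi⟩
    · left
      exact mem_muEps_self.2 ((sc_mu_root hsc j).1 hj)
    · right
      have hv : ¬ (ts i).IsVar := by
        cases hts : ts i with
        | var x => simp [hts, symbols] at hi
        | app g' ts' => simp [hts, Term.IsVar]
      have hm : i ∈ μ f := (sc_mu_root hsc i).2 hv
      exact Set.mem_iUnion.2 ⟨i, ih i (sc_sub hsc hm) g hi hj⟩

lemma lemC : ∀ {t : Term F ar X} {g : F}, g ∉ symbols t → muTerm t g = ∅ := by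
  intro t
  induction t with
  | var x => intro g _; rfl
  | app f ts ih =>
    intro g hg
    simp only [symbols, Set.mem_union, Set.mem_singleton_iff, Set.mem_iUnion, not_or,
      not_exists] at hg
    rw [muTerm_app_apply]
    rw [Set.union_empty_iff]
    constructor
    · ext j
      simp only [muEps, Set.mem_setOf_eq, Set.mem_empty_iff_false, iff_false, not_exists]
      intro h; exact absurd h hg.1
    · simp only [Set.iUnion_eq_empty]
      exact fun i => ih i (hg.2 i)

end Aux

end CSR
/-- A replacement map over the signature F(t) which is strongly compatible
with t equals μ_t. -/
theorem stmt_5 {F X : Type} {ar : F → ℕ} (t : CSR.Term F ar X) (μ : CSR.RepMap F ar)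
    (hsig : ∀ g : F, g ∉ CSR.symbols t → μ g = ∅)
    (hsc : CSR.PosF t = CSR.PosMu μ t) :
    μ = CSR.muTerm t := by
  funext g
  by_cases hg : g ∈ CSR.symbols t
  · exact le_antisymm (fun j hj => CSR.lemB hsc g hg hj) (fun j hj => CSR.lemA hsc g hj)
  · rw [hsig g hg, CSR.lemC hg]
end

section
/- Let R be a left-linear TRS with constructors C, and μ a canonical replacement map for R. If s →* c(t₁,...,tₖ) for a constructor c ∈ C, then there exist terms u₁,...,uₖ such that s ↪*_μ c(u₁,...,uₖ) and uᵢ →* tᵢ for all 1 ≤ i ≤ k. -/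
namespace CSR

variable {F X : Type} {ar : F → ℕ}

/-- Parallel rewriting: contract a set of pairwise disjoint redexes. -/
inductive Par (R : TRS F ar X) : Term F ar X → Term F ar X → Prop
  | var (x : X) : Par R (.var x) (.var x)
  | app (f : F) {ss ts : Fin (ar f) → Term F ar X} :
      (∀ i, Par R (ss i) (ts i)) → Par R (.app f ss) (.app f ts)
  | step {r : Rule F ar X} (hr : r ∈ R) (σ : X → Term F ar X) :
      Par R (subst σ r.lhs) (subst σ r.rhs)

theorem Par.refl (R : TRS F ar X) (t : Term F ar X) : Par R t t := by
  induction t with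
  | var x => exact .var x
  | app f ts ih => exact .app f ih

theorem par_subst {R : TRS F ar X} {σ' σ : X → Term F ar X}
    (h : ∀ x, Par R (σ' x) (σ x)) (t : Term F ar X) :
    Par R (subst σ' t) (subst σ t) := by
  induction t with
  | var x => exact h x
  | app f ts ih => exact .app f ih

theorem mem_varOccs_app {f : F} {ts : Fin (ar f) → Term F ar X} {x : X} :
    x ∈ varOccs (Term.app f ts) ↔ ∃ i, x ∈ varOccs (ts i) := by
  show x ∈ ∑ i : Fin (ar f), varOccs (ts i) ↔ _
  simp [Multiset.mem_sum]

theorem subst_congr {σ₁ σ₂ : X → Term F ar X} :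
    ∀ {t : Term F ar X}, (∀ x ∈ varOccs t, σ₁ x = σ₂ x) → subst σ₁ t = subst σ₂ t := by
  intro t
  induction t with
  | var x => intro h; exact h x (by simp [varOccs])
  | app f ts ih =>
      intro h
      show Term.app f _ = Term.app f _
      exact congrArg _ (funext fun i => ih i fun x hx => h x (mem_varOccs_app.2 ⟨i, hx⟩))

theorem nil_mem_posMu (μ : RepMap F ar) (t : Term F ar X) : [] ∈ PosMu μ t := by
  cases t <;> simp [PosMu]

theorem cons_mem_posMu {μ : RepMap F ar} {f : F} {ts : Fin (ar f) → Term F ar X}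
    {j : Fin (ar f)} (hj : j ∈ μ f) {p : List ℕ} (hp : p ∈ PosMu μ (ts j)) :
    ((j : ℕ) :: p) ∈ PosMu μ (Term.app f ts) := by
  refine Set.mem_union_right _ ?_
  exact Set.mem_biUnion hj ⟨p, hp, rfl⟩

theorem cons_mem_posMu_inv {μ : RepMap F ar} {f : F} {ts : Fin (ar f) → Term F ar X}
    {i : ℕ} {p : List ℕ} (h : (i :: p) ∈ PosMu μ (Term.app f ts)) :
    ∃ j, j ∈ μ f ∧ (j : ℕ) = i ∧ p ∈ PosMu μ (ts j) := by
  rcases h with h | h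
  · simp at h
  · rw [Set.mem_iUnion₂] at h
    obtain ⟨j, hj, hmem⟩ := h
    obtain ⟨p', hp', heq⟩ := hmem
    obtain ⟨h1, h2⟩ := List.cons.injEq .. ▸ heq
    exact ⟨j, hj, h1, h2 ▸ hp'⟩

theorem rewAt_nil_inv {R : TRS F ar X} {s t : Term F ar X} (h : RewAt R [] s t) :
    ∃ r ∈ R, ∃ σ, s = subst σ r.lhs ∧ t = subst σ r.rhs := by
  rcases h with ⟨r, hr, σ, h1, h2⟩
  simp [subtermAt] at h1
  simp [replaceAt] at h2
  exact ⟨r, hr, σ, h1, h2.symm⟩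

theorem rewAt_nil_intro {R : TRS F ar X} {r : Rule F ar X} (hr : r ∈ R)
    (σ : X → Term F ar X) : RewAt R [] (subst σ r.lhs) (subst σ r.rhs) :=
  ⟨r, hr, σ, by simp [subtermAt], by simp [replaceAt]⟩

theorem csrew_of_rewAt_nil {R : TRS F ar X} {μ : RepMap F ar} {s t : Term F ar X}
    (h : RewAt R [] s t) : CSRew R μ s t :=
  ⟨[], nil_mem_posMu μ s, h⟩

theorem rewAt_cons_intro {R : TRS F ar X} {f : F} {g : Fin (ar f) → Term F ar X}
    (j : Fin (ar f)) {p : List ℕ} {v : Term F ar X} (h : RewAt R p (g j) v) :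
    RewAt R ((j : ℕ) :: p) (Term.app f g) (Term.app f (Function.update g j v)) := by
  rcases h with ⟨r, hr, σ, h1, h2⟩
  refine ⟨r, hr, σ, ?_, ?_⟩
  · simpa [subtermAt, j.isLt] using h1
  · simp [replaceAt, j.isLt, h2]

theorem rewAt_cons_inv {R : TRS F ar X} {f : F} {ts : Fin (ar f) → Term F ar X}
    {i : ℕ} {p : List ℕ} {d : Term F ar X} (h : RewAt R (i :: p) (Term.app f ts) d) :
    ∃ (hi : i < ar f) (u : Term F ar X), RewAt R p (ts ⟨i, hi⟩) u ∧
      d = Term.app f (Function.update ts ⟨i, hi⟩ u) := by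
  rcases h with ⟨r, hr, σ, h1, h2⟩
  by_cases hi : i < ar f
  · simp [subtermAt, hi] at h1
    simp [replaceAt, hi] at h2
    obtain ⟨u, hu, hd⟩ := h2
    exact ⟨hi, u, ⟨r, hr, σ, h1, hu⟩, hd.symm⟩
  · simp [subtermAt, hi] at h1

theorem csrew_app {R : TRS F ar X} {μ : RepMap F ar} {f : F}
    {g : Fin (ar f) → Term F ar X} {j : Fin (ar f)} (hj : j ∈ μ f) {v : Term F ar X}
    (h : CSRew R μ (g j) v) :
    CSRew R μ (Term.app f g) (Term.app f (Function.update g j v)) := by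
  rcases h with ⟨p, hp, hr⟩
  exact ⟨(j : ℕ) :: p, cons_mem_posMu hj hp, rewAt_cons_intro j hr⟩

theorem csrew_app_star {R : TRS F ar X} {μ : RepMap F ar} {f : F}
    {g : Fin (ar f) → Term F ar X} {j : Fin (ar f)} (hj : j ∈ μ f) {v : Term F ar X}
    (h : CSRewStar R μ (g j) v) :
    CSRewStar R μ (Term.app f g) (Term.app f (Function.update g j v)) := by
  induction h with
  | refl => rw [Function.update_eq_self]; exact .refl
  | @tail b c h1 h2 ih =>
      refine ih.tail ?_
      have hb : (Function.update g j b) j = b := Function.update_self ..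
      have := csrew_app (g := Function.update g j b) hj (hb ▸ h2)
      rwa [Function.update_idem] at this

theorem rew_app {R : TRS F ar X} {f : F}
    {g : Fin (ar f) → Term F ar X} (j : Fin (ar f)) {v : Term F ar X}
    (h : Rew R (g j) v) :
    Rew R (Term.app f g) (Term.app f (Function.update g j v)) := by
  rcases h with ⟨p, hr⟩
  exact ⟨(j : ℕ) :: p, rewAt_cons_intro j hr⟩

theorem rew_app_star {R : TRS F ar X} {f : F}
    {g : Fin (ar f) → Term F ar X} (j : Fin (ar f)) {v : Term F ar X}
    (h : RewStar R (g j) v) :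
    RewStar R (Term.app f g) (Term.app f (Function.update g j v)) := by
  induction h with
  | refl => rw [Function.update_eq_self]; exact .refl
  | @tail b c h1 h2 ih =>
      refine ih.tail ?_
      have hb : (Function.update g j b) j = b := Function.update_self ..
      have := rew_app (g := Function.update g j b) j (hb ▸ h2)
      rwa [Function.update_idem] at this

theorem rewStar_app_all {R : TRS F ar X} {f : F} {g h : Fin (ar f) → Term F ar X}
    (hall : ∀ i, RewStar R (g i) (h i)) :
    RewStar R (Term.app f g) (Term.app f h) := by
  have main : ∀ n, n ≤ ar f →
      RewStar R (Term.app f g) (Term.app f fun i => if (i : ℕ) < n then h i else g i) := by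
    intro n
    induction n with
    | zero =>
        intro _
        have : (fun i : Fin (ar f) => if (i : ℕ) < 0 then h i else g i) = g :=
          funext fun i => by simp
        rw [this]
        exact .refl
    | succ n ihn =>
        intro hn
        have hjlt : n < ar f := hn
        set j : Fin (ar f) := ⟨n, hjlt⟩ with hjdef
        set G : Fin (ar f) → Term F ar X := fun i => if (i : ℕ) < n then h i else g i with hG
        have hGj : G j = g j := by simp [hG, hjdef]
        have lift := rew_app_star (g := G) j (hGj ▸ hall j)
        have heq : Function.update G j (h j) =
            fun i : Fin (ar f) => if (i : ℕ) < n + 1 then h i else g i := by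
          funext i
          by_cases hij : i = j
          · subst hij; simp [hG, hjdef]
          · have hne : (i : ℕ) ≠ n := fun hval => hij (Fin.ext (by simp [hjdef, hval]))
            rw [Function.update_of_ne hij]
            simp only [hG]
            by_cases hlt : (i : ℕ) < n
            · rw [if_pos hlt, if_pos (by omega)]
            · rw [if_neg hlt, if_neg (by omega)]
        exact (ihn (by omega)).trans (heq ▸ lift)
  have := main (ar f) le_rfl
  have heq : (fun i : Fin (ar f) => if (i : ℕ) < ar f then h i else g i) = h :=
    funext fun i => if_pos i.isLt
  rwa [heq] at this

theorem rew_par {R : TRS F ar X} {s t : Term F ar X} (h : Rew R s t) : Par R s t := by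
  obtain ⟨p, hp⟩ := h
  induction p generalizing s t with
  | nil =>
      obtain ⟨r, hr, σ, h1, h2⟩ := rewAt_nil_inv hp
      subst h1; subst h2
      exact .step hr σ
  | cons i p ih =>
      cases s with
      | var x => rcases hp with ⟨r, hr, σ, h1, h2⟩; simp [subtermAt] at h1
      | app f ss =>
          obtain ⟨hi, u, hu, hd⟩ := rewAt_cons_inv hp
          subst hd
          refine .app f fun k => ?_
          by_cases hk : k = ⟨i, hi⟩
          · subst hk; rw [Function.update_self]; exact ih hu
          · rw [Function.update_of_ne hk]; exact Par.refl R (ss k)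

theorem par_rewStar {R : TRS F ar X} {s t : Term F ar X} (h : Par R s t) :
    RewStar R s t := by
  induction h with
  | var x => exact .refl
  | app f h ih => exact rewStar_app_all ih
  | step hr σ => exact .single ⟨[], rewAt_nil_intro hr σ⟩

theorem muTerm_le_app {f : F} (ls : Fin (ar f) → Term F ar X) (i : Fin (ar f)) :
    muTerm (ls i) ≤ muTerm (Term.app f ls) := by
  show muTerm (ls i) ≤ muEps f ls ⊔ ⨆ i, muTerm (ls i)
  exact le_sup_of_le_right (le_iSup (fun i => muTerm (ls i)) i)

theorem mem_muTerm_app {f : F} {ls : Fin (ar f) → Term F ar X} (i : Fin (ar f))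
    (h : ¬ (ls i).IsVar) : i ∈ muTerm (Term.app f ls) f := by
  have h1 : i ∈ muEps f ls f := ⟨rfl, h⟩
  have h2 : muEps f ls ≤ muTerm (Term.app f ls) := by
    show muEps f ls ≤ muEps f ls ⊔ ⨆ i, muTerm (ls i)
    exact le_sup_left
  exact h2 f h1

theorem muTerm_le_muCan {R : TRS F ar X} {r : Rule F ar X} (hr : r ∈ R) :
    muTerm r.lhs ≤ muCan R :=
  le_iSup₂ (f := fun (r : Rule F ar X) (_ : r ∈ R) => muTerm r.lhs) r hr

theorem par_app_inv {R : TRS F ar X} {a : Term F ar X} {f : F}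
    {ts : Fin (ar f) → Term F ar X} (h : Par R a (Term.app f ts)) :
    (∃ ss, a = Term.app f ss ∧ ∀ i, Par R (ss i) (ts i)) ∨
    (∃ r ∈ R, ∃ σ₀, a = subst σ₀ r.lhs ∧ Term.app f ts = subst σ₀ r.rhs) := by
  generalize hb : Term.app f ts = b at h
  cases h with
  | var x => exact absurd hb (by intro h; cases h)
  | @app f' ss ts' h =>
      injection hb with h1 h2
      subst h1
      have h2' : ts = ts' := eq_of_heq h2
      subst h2'
      exact Or.inl ⟨ss, rfl, h⟩
  | step hr σ₀ => exact Or.inr ⟨_, hr, σ₀, rfl, rfl⟩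

theorem patternLift {R : TRS F ar X} {μ : RepMap F ar} [DecidableEq X] :
    ∀ l : Term F ar X, (∀ x, (varOccs l).count x ≤ 1) → muTerm l ≤ μ →
      ∀ (σ : X → Term F ar X) (a : Term F ar X), Par R a (subst σ l) →
        ∃ σ', CSRewStar R μ a (subst σ' l) ∧ ∀ x, Par R (σ' x) (σ x) := by
  intro l
  induction l with
  | var x =>
      intro _ _ σ a hpar
      refine ⟨Function.update σ x a, ?_, ?_⟩
      · show CSRewStar R μ a (Function.update σ x a x)
        rw [Function.update_self]
        exact .refl
      · intro y
        by_cases hy : y = x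
        · subst hy; rw [Function.update_self]; exact hpar
        · rw [Function.update_of_ne hy]; exact Par.refl R (σ y)
  | app f ls ih =>
      intro hlin hmu σ a hpar
      have hsub : subst σ (Term.app f ls) = Term.app f (fun i => subst σ (ls i)) := rfl
      rw [hsub] at hpar
      have hdisj : ∀ i j : Fin (ar f), i ≠ j → ∀ x, x ∈ varOccs (ls i) →
          x ∉ varOccs (ls j) := by
        intro i j hij x hi hj
        have h1 : 1 ≤ (varOccs (ls i)).count x := Multiset.one_le_count_iff_mem.2 hi
        have h2 : 1 ≤ (varOccs (ls j)).count x := Multiset.one_le_count_iff_mem.2 hj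
        have hc : (varOccs (Term.app f ls)).count x =
            ∑ k : Fin (ar f), (varOccs (ls k)).count x := by
          show (∑ k : Fin (ar f), varOccs (ls k)).count x = _
          rw [Multiset.count_sum']
        have hge : (varOccs (ls i)).count x + (varOccs (ls j)).count x ≤
            ∑ k : Fin (ar f), (varOccs (ls k)).count x := by
          have hs := Finset.sum_le_sum_of_subset
            (f := fun k => (varOccs (ls k)).count x)
            (Finset.subset_univ ({i, j} : Finset (Fin (ar f))))
          rwa [Finset.sum_pair hij] at hs
        have := hlin x
        omega
      have hlin_i : ∀ (i : Fin (ar f)) x, (varOccs (ls i)).count x ≤ 1 := by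
        intro i x
        refine le_trans ?_ (hlin x)
        have hc : (varOccs (Term.app f ls)).count x =
            ∑ k : Fin (ar f), (varOccs (ls k)).count x := by
          show (∑ k : Fin (ar f), varOccs (ls k)).count x = _
          rw [Multiset.count_sum']
        rw [hc]
        exact Finset.single_le_sum (f := fun k => (varOccs (ls k)).count x)
          (fun _ _ => Nat.zero_le _) (Finset.mem_univ i)
      have hmu_i : ∀ i : Fin (ar f), muTerm (ls i) ≤ μ :=
        fun i => le_trans (muTerm_le_app ls i) hmu
      have hmuf : ∀ i : Fin (ar f), ¬ (ls i).IsVar → i ∈ μ f :=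
        fun i h => hmu f (mem_muTerm_app i h)
      rcases par_app_inv hpar with ⟨ss, rfl, hss⟩ | ⟨r, hr, σ₀, rfl, heq0⟩
      · have main : ∀ n, n ≤ ar f → ∃ σ',
              CSRewStar R μ (Term.app f ss)
                (Term.app f fun i => if (i : ℕ) < n then subst σ' (ls i) else ss i) ∧
              ∀ x, Par R (σ' x) (σ x) := by
            intro n
            induction n with
            | zero =>
                refine fun _ => ⟨σ, ?_, fun x => Par.refl R (σ x)⟩
                have : (fun i : Fin (ar f) =>
                    if (i : ℕ) < 0 then subst σ (ls i) else ss i) = ss :=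
                  funext fun i => by simp
                rw [this]
                exact .refl
            | succ n ihn =>
                intro hn
                obtain ⟨σ', hstar, hpar'⟩ := ihn (by omega)
                have hjlt : n < ar f := hn
                set j : Fin (ar f) := ⟨n, hjlt⟩ with hjdef
                set G : Fin (ar f) → Term F ar X :=
                  fun i => if (i : ℕ) < n then subst σ' (ls i) else ss i with hG
                have hGj : G j = ss j := by simp [hG, hjdef]
                have hvalne : ∀ i : Fin (ar f), i ≠ j → (i : ℕ) ≠ n :=
                  fun i hij hval => hij (Fin.ext (by simp [hjdef, hval]))
                cases hls : ls j with
                | var x =>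
                    refine ⟨Function.update σ' x (ss j), ?_, ?_⟩
                    · have heq : (fun i : Fin (ar f) => if (i : ℕ) < n + 1 then
                          subst (Function.update σ' x (ss j)) (ls i) else ss i) = G := by
                        funext i
                        by_cases hij : i = j
                        · subst hij
                          rw [if_pos (by simp [hjdef])]
                          rw [hls]
                          show Function.update σ' x (ss j) x = G j
                          rw [Function.update_self, hGj]
                        · have hne := hvalne i hij
                          have hxi : x ∉ varOccs (ls i) := by
                            intro hmem
                            exact hdisj j i (Ne.symm hij) x (by simp [hls, varOccs]) hmem
                          simp only [hG]
                          by_cases hlt : (i : ℕ) < n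
                          · rw [if_pos (by omega), if_pos hlt]
                            exact subst_congr fun y hy => Function.update_of_ne
                              (fun (h : y = x) => hxi (h ▸ hy)) _ _
                          · rw [if_neg (by omega), if_neg hlt]
                      rw [heq]; exact hstar
                    · intro y
                      by_cases hy : y = x
                      · subst hy; rw [Function.update_self]
                        have h3 : Par R (ss j) (subst σ (ls j)) := hss j
                        rw [hls] at h3
                        exact h3
                      · rw [Function.update_of_ne hy]; exact hpar' y
                | app g0 gs0 =>
                    have hnv : ¬ (ls j).IsVar := by rw [hls]; simp [Term.IsVar]
                    have hjmu : j ∈ μ f := hmuf j hnv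
                    obtain ⟨σ'', hstar'', hpar''⟩ :=
                      ih j (hlin_i j) (hmu_i j) σ (ss j) (hss j)
                    set σn : X → Term F ar X :=
                      fun y => if y ∈ varOccs (ls j) then σ'' y else σ' y with hσn
                    refine ⟨σn, ?_, ?_⟩
                    · have lift := csrew_app_star (g := G) hjmu (hGj ▸ hstar'')
                      have heq : Function.update G j (subst σ'' (ls j)) =
                          fun i : Fin (ar f) => if (i : ℕ) < n + 1 then
                            subst σn (ls i) else ss i := by
                        funext i
                        by_cases hij : i = j
                        · subst hij
                          rw [Function.update_self, if_pos (by simp [hjdef])]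
                          exact subst_congr fun y hy => by simp [hσn, hy]
                        · have hne := hvalne i hij
                          rw [Function.update_of_ne hij]
                          simp only [hG]
                          by_cases hlt : (i : ℕ) < n
                          · rw [if_pos hlt, if_pos (by omega)]
                            refine subst_congr fun y hy => ?_
                            have : y ∉ varOccs (ls j) := hdisj i j hij y hy
                            simp [hσn, this]
                          · rw [if_neg hlt, if_neg (by omega)]
                      exact hstar.trans (heq ▸ lift)
                    · intro y
                      by_cases hy : y ∈ varOccs (ls j)
                      · simp only [hσn, if_pos hy]; exact hpar'' y
                      · simp only [hσn, if_neg hy]; exact hpar' y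
        obtain ⟨σ', hstar, hpar'⟩ := main (ar f) le_rfl
        refine ⟨σ', ?_, hpar'⟩
        have heq : (fun i : Fin (ar f) =>
            if (i : ℕ) < ar f then subst σ' (ls i) else ss i) =
            fun i => subst σ' (ls i) := funext fun i => if_pos i.isLt
        rw [heq] at hstar
        exact hstar
      · refine ⟨σ, ?_, fun x => Par.refl R (σ x)⟩
        rw [hsub, heq0]
        exact .single (csrew_of_rewAt_nil (rewAt_nil_intro hr σ₀))

theorem parCommute {R : TRS F ar X} {μ : RepMap F ar} [DecidableEq X]
    (hll : LeftLinear R) (hcan : Canonical R μ) {a b : Term F ar X}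
    (hpar : Par R a b) :
    ∀ q d, q ∈ PosMu μ b → RewAt R q b d →
      ∃ d', CSRewStar R μ a d' ∧ Par R d' d := by
  induction hpar with
  | var x =>
      intro q d hq hrw
      exfalso
      cases q with
      | nil =>
          obtain ⟨r, hr, σ, h1, h2⟩ := rewAt_nil_inv hrw
          cases hl : r.lhs with
          | var y => exact r.lhs_not_var (by rw [hl]; trivial)
          | app g gs => rw [hl] at h1; cases h1
      | cons i p =>
          rcases hrw with ⟨r, hr, σ, h1, h2⟩
          simp [subtermAt] at h1
  | step hr σ₀ =>
      intro q d hq hrw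
      exact ⟨d, (Relation.ReflTransGen.single
        (csrew_of_rewAt_nil (rewAt_nil_intro hr σ₀))).tail ⟨q, hq, hrw⟩, Par.refl R d⟩
  | @app f ss ts h ih =>
      intro q d hq hrw
      cases q with
      | nil =>
          obtain ⟨r, hr, σ, hb, hd⟩ := rewAt_nil_inv hrw
          have hab : Par R (Term.app f ss) (Term.app f ts) := .app f h
          obtain ⟨σ', hstar, hp⟩ := patternLift r.lhs (hll r hr)
            (le_trans (muTerm_le_muCan hr) hcan) σ (Term.app f ss) (hb ▸ hab)
          exact ⟨subst σ' r.rhs,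
            hstar.tail (csrew_of_rewAt_nil (rewAt_nil_intro hr σ')),
            hd ▸ par_subst hp r.rhs⟩
      | cons i p =>
          obtain ⟨j, hj, hji, hp⟩ := cons_mem_posMu_inv hq
          obtain ⟨hi, u, hru, hd⟩ := rewAt_cons_inv hrw
          have hj' : j = ⟨i, hi⟩ := Fin.ext hji
          subst hd
          rw [← hj'] at hru ⊢
          obtain ⟨u', hstar', hpar'⟩ := ih j p u hp hru
          refine ⟨Term.app f (Function.update ss j u'),
            csrew_app_star hj hstar', .app f fun k => ?_⟩
          by_cases hk : k = j
          · subst hk; rw [Function.update_self, Function.update_self]; exact hpar'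
          · rw [Function.update_of_ne hk, Function.update_of_ne hk]; exact h k

theorem parCommuteStar {R : TRS F ar X} {μ : RepMap F ar} [DecidableEq X]
    (hll : LeftLinear R) (hcan : Canonical R μ) {b e : Term F ar X}
    (h : CSRewStar R μ b e) :
    ∀ a, Par R a b → ∃ e', CSRewStar R μ a e' ∧ Par R e' e := by
  induction h using Relation.ReflTransGen.head_induction_on with
  | refl => exact fun a hpar => ⟨a, .refl, hpar⟩
  | head hbc hce ih =>
      intro a hpar
      obtain ⟨q, hq, hrw⟩ := hbc
      obtain ⟨d', h1, h2⟩ := parCommute hll hcan hpar q _ hq hrw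
      obtain ⟨e', h3, h4⟩ := ih d' h2
      exact ⟨e', h1.trans h3, h4⟩

end CSR

/-- If s →* c(t₁,…,tₖ) for a constructor c, then s ↪*_μ c(u₁,…,uₖ)
with uᵢ →* tᵢ for all i. -/
theorem stmt_7 {F X : Type} {ar : F → ℕ} [DecidableEq X] (R : CSR.TRS F ar X)
    (μ : CSR.RepMap F ar) (hll : CSR.LeftLinear R) (hcan : CSR.Canonical R μ)
    (s : CSR.Term F ar X) (c : F) (hc : c ∉ CSR.Defined R)
    (ts : Fin (ar c) → CSR.Term F ar X)
    (h : CSR.RewStar R s (CSR.Term.app c ts)) :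
    ∃ us : Fin (ar c) → CSR.Term F ar X,
      CSR.CSRewStar R μ s (CSR.Term.app c us) ∧ ∀ i, CSR.RewStar R (us i) (ts i) := by
  induction h using Relation.ReflTransGen.head_induction_on with
  | refl => exact ⟨ts, .refl, fun i => .refl⟩
  | head hstep htail ih =>
      obtain ⟨us, hcs, hus⟩ := ih
      obtain ⟨e', h1, h2⟩ := CSR.parCommuteStar hll hcan hcs _ (CSR.rew_par hstep)
      rcases CSR.par_app_inv h2 with ⟨us', rfl, hps⟩ | ⟨r, hr, σ₀, rfl, heq⟩
      · exact ⟨us', h1, fun i => (CSR.par_rewStar (hps i)).trans (hus i)⟩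
      · refine ⟨us, h1.tail ?_, hus⟩
        rw [heq]
        exact CSR.csrew_of_rewAt_nil (CSR.rewAt_nil_intro hr σ₀)
end

section
/- If a TRS R is constructor normalizing (every finite ground term rewrites to a possibly infinite constructor normal form), then R is exhaustive: there is no finite ground normal form containing a defined symbol; equivalently, every term f(t₁,...,tₖ) with f defined and all tᵢ closed constructor terms is a redex-containing term. -/
namespace CSR
lemma exists_pos_of_mem_symbols {F X : Type} {ar : F → ℕ} {f : F} :
    ∀ {t : Term F ar X}, f ∈ symbols t → ∃ p, labelAt t p = some f
  | .var _, hf => by simp [symbols] at hf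
  | .app g ts, hf => by
      rcases hf with hf | hf
      · exact ⟨[], by simp at hf; simp [labelAt, subtermAt, Term.root, hf]⟩
      · simp only [Set.mem_iUnion] at hf
        obtain ⟨i, hi⟩ := hf
        obtain ⟨p, hp⟩ := exists_pos_of_mem_symbols hi
        refine ⟨(i : ℕ) :: p, ?_⟩
        simp [labelAt, subtermAt, i.isLt, Fin.eta] at hp ⊢
        exact hp

lemma rewStar_eq_of_nf {F X : Type} {ar : F → ℕ} {R : TRS F ar X} {t u : Term F ar X}
    (hnf : NormalForm R t) (hst : RewStar R t u) : u = t := by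
  rcases (Relation.ReflTransGen.cases_head hst) with rfl | ⟨v, hv, _⟩
  · rfl
  · exact absurd ⟨v, hv⟩ hnf
end CSR

/-- If R is constructor normalizing then R is exhaustive: no finite ground
normal form contains a defined symbol. -/
theorem stmt_8 {F X : Type} {ar : F → ℕ} (R : CSR.TRS F ar X)
    (h : CSR.ConstructorNormalizing R) :
    ∀ t : CSR.Term F ar X, CSR.IsGround t → CSR.NormalForm R t →
      ∀ f ∈ CSR.symbols t, f ∉ CSR.Defined R := by
  intro t hg hnf f hf
  obtain ⟨δ, hcons, hrew⟩ := h t hg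
  obtain ⟨p, hp⟩ := CSR.exists_pos_of_mem_symbols hf
  obtain ⟨u, hu, hlbl⟩ := hrew (p.length + 1)
  have := CSR.rewStar_eq_of_nf hnf hu
  subst this
  exact hcons p f ((hlbl p (Nat.lt_succ_self _)) ▸ hp)
end
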